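/- For every ICGS I, every initial path ρ, and every agent a: a strategy σ is weakly uniform for a in ρ if and only if I, [a ↦ σ], ρ ⊨_ESL AG ⋁_{c ∈ Act} K_a AX p^a_c, where the formula is evaluated in the assignment binding only agent a to σ. -/
import Mathlib


/-- A concurrent game structure: transition function, initial state, valuation. -/
structure CGS (S Ag Act AP : Type) where
  δ : S → (Ag → Act) → S
  init : S
  val : S → AP → Prop

variable {S Ag Act AP Var : Type}

/-- An initial (finite) path: a start state together with the list of decisions taken. -/
abbrev FPath (S Ag Act : Type) := S × List (Ag → Act)

/-- Last state of an initial path. -/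
def CGS.lastState (G : CGS S Ag Act AP) (ρ : FPath S Ag Act) : S :=
  ρ.2.foldl G.δ ρ.1

/-- A strategy assigns an action to every initial path. -/
abbrev Strat (S Ag Act : Type) := FPath S Ag Act → Act

/-- Concatenation of initial paths (meaningful when `G.lastState ρ = ρ'.1`,
i.e. they are glued at the shared state). -/
def FPath.concat (ρ ρ' : FPath S Ag Act) : FPath S Ag Act := (ρ.1, ρ.2 ++ ρ'.2)

/-- The finite prefix with `n` decisions of the play from `q` whose decision stream is `d`. -/
def prefixPath (q : S) (d : ℕ → Ag → Act) (n : ℕ) : FPath S Ag Act :=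
  (q, List.ofFn fun i : Fin n => d i)

/-- The state reached after `i` steps of the play from `q` with decision stream `d`. -/
def stateAt (G : CGS S Ag Act AP) (q : S) (d : ℕ → Ag → Act) (i : ℕ) : S :=
  G.lastState (prefixPath q d i)

/-- An assignment: a partial map from agents and variables to strategies. -/
abbrev Assign (S Ag Act Var : Type) := Ag ⊕ Var → Option (Strat S Ag Act)

/-- The outcome of an assignment from a state: the set of plays (identified with
their decision streams) compatible with all strategies assigned to agents. -/
def outcome (G : CGS S Ag Act AP) (q : S) (χ : Assign S Ag Act Var) :
    Set (ℕ → Ag → Act) :=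
  {d | ∀ (k : ℕ) (a : Ag) (σ : Strat S Ag Act),
      χ (Sum.inl a) = some σ → d k a = σ (prefixPath q d k)}

/-- The `ρ`-translation of a strategy. -/
def transStrat [DecidableEq S] (G : CGS S Ag Act AP) (ρ : FPath S Ag Act)
    (σ : Strat S Ag Act) : Strat S Ag Act :=
  fun ρ' => if ρ'.1 = G.lastState ρ then σ (ρ.concat ρ') else σ ρ'

/-- The `ρ`-translation of an assignment. -/
def transAssign [DecidableEq S] (G : CGS S Ag Act AP) (ρ : FPath S Ag Act)
    (χ : Assign S Ag Act Var) : Assign S Ag Act Var :=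
  fun l => (χ l).map (transStrat G ρ)

/-- An imperfect information CGS: a CGS with an indistinguishability
equivalence relation on initial paths for each agent. -/
structure ICGS (S Ag Act AP : Type) extends CGS S Ag Act AP where
  rel : Ag → FPath S Ag Act → FPath S Ag Act → Prop
  rel_equiv : ∀ a, Equivalence (rel a)

/-- The initial path obtained by extending `ρ` with the first `i` decisions of
the stream `d`. -/
def extFPath (ρ : FPath S Ag Act) (d : ℕ → Ag → Act) (i : ℕ) : FPath S Ag Act :=
  (ρ.1, ρ.2 ++ List.ofFn fun t : Fin i => d t)

/-- Outcome of an assignment from an initial path: plays extending `ρ` (given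
by their decision streams) in which each bound agent follows its strategy,
evaluated on the full history. -/
def outcomeFrom (χ : Assign S Ag Act Var) (ρ : FPath S Ag Act) :
    Set (ℕ → Ag → Act) :=
  {d | ∀ (k : ℕ) (a : Ag) (σ : Strat S Ag Act),
      χ (Sum.inl a) = some σ → d k a = σ (extFPath ρ d k)}

mutual
/-- State formulas of Epistemic Strategy Logic (ESL). `act a c` is the action
proposition `p^a_c` ("agent `a` just played action `c`"), and `know A` is the
distributed knowledge operator `D_A`. -/
inductive ESLForm (AP Ag Act Var : Type) : Type 1 where
  | fls  : ESLForm AP Ag Act Var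
  | atom : AP → ESLForm AP Ag Act Var
  | act  : Ag → Act → ESLForm AP Ag Act Var
  | neg  : ESLForm AP Ag Act Var → ESLForm AP Ag Act Var
  | or   : ESLForm AP Ag Act Var → ESLForm AP Ag Act Var → ESLForm AP Ag Act Var
  | exi  : Var → ESLForm AP Ag Act Var → ESLForm AP Ag Act Var
  | bind : Ag → Var → ESLForm AP Ag Act Var → ESLForm AP Ag Act Var
  | unbind : Ag → ESLForm AP Ag Act Var → ESLForm AP Ag Act Var
  | pathE : ESLPath AP Ag Act Var → ESLForm AP Ag Act Var
  | know : Set Ag → ESLForm AP Ag Act Var → ESLForm AP Ag Act Var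
/-- Path formulas of ESL. -/
inductive ESLPath (AP Ag Act Var : Type) : Type 1 where
  | state : ESLForm AP Ag Act Var → ESLPath AP Ag Act Var
  | neg   : ESLPath AP Ag Act Var → ESLPath AP Ag Act Var
  | or    : ESLPath AP Ag Act Var → ESLPath AP Ag Act Var → ESLPath AP Ag Act Var
  | next  : ESLPath AP Ag Act Var → ESLPath AP Ag Act Var
  | untl  : ESLPath AP Ag Act Var → ESLPath AP Ag Act Var → ESLPath AP Ag Act Var
end

mutual
/-- Semantics of ESL state formulas, at an initial path under an assignment. -/
def ESLsat [DecidableEq Ag] [DecidableEq Var] (I : ICGS S Ag Act AP)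
    (χ : Assign S Ag Act Var) (ρ : FPath S Ag Act) : ESLForm AP Ag Act Var → Prop
  | .fls => False
  | .atom p => I.val (I.toCGS.lastState ρ) p
  | .act a c => ∃ dec, ρ.2.getLast? = some dec ∧ dec a = c
  | .neg φ => ¬ ESLsat I χ ρ φ
  | .or φ φ' => ESLsat I χ ρ φ ∨ ESLsat I χ ρ φ'
  | .exi x φ =>
      ∃ σ : Strat S Ag Act, ESLsat I (Function.update χ (Sum.inr x) (some σ)) ρ φ
  | .bind a x φ => ESLsat I (Function.update χ (Sum.inl a) (χ (Sum.inr x))) ρ φ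
  | .unbind a φ => ESLsat I (Function.update χ (Sum.inl a) none) ρ φ
  | .pathE ψ => ∃ d ∈ outcomeFrom χ ρ, ESLsatP I χ ρ d 0 ψ
  | .know A φ => ∀ ρ' : FPath S Ag Act, (∀ a ∈ A, I.rel a ρ ρ') → ESLsat I χ ρ' φ
/-- Semantics of ESL path formulas, on the play extending `ρ` with decision
stream `d`, at position `i` (relative to the end of `ρ`). -/
def ESLsatP [DecidableEq Ag] [DecidableEq Var] (I : ICGS S Ag Act AP)
    (χ : Assign S Ag Act Var) (ρ : FPath S Ag Act) (d : ℕ → Ag → Act) (i : ℕ) :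
    ESLPath AP Ag Act Var → Prop
  | .state φ => ESLsat I χ (extFPath ρ d i) φ
  | .neg ψ => ¬ ESLsatP I χ ρ d i ψ
  | .or ψ ψ' => ESLsatP I χ ρ d i ψ ∨ ESLsatP I χ ρ d i ψ'
  | .next ψ => ESLsatP I χ ρ d (i + 1) ψ
  | .untl ψ ψ' => ∃ j, i ≤ j ∧ ESLsatP I χ ρ d j ψ' ∧
      ∀ k, i ≤ k → k < j → ESLsatP I χ ρ d k ψ
end

/-- `A X φ`, i.e. `¬ E X ¬φ`. -/
def AXf (φ : ESLForm AP Ag Act Var) : ESLForm AP Ag Act Var :=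
  .neg (.pathE (.next (.state (.neg φ))))

/-- `A G φ`, i.e. `¬ E (⊤ U ¬φ)`. -/
def AGf (φ : ESLForm AP Ag Act Var) : ESLForm AP Ag Act Var :=
  .neg (.pathE (.untl (.state (.neg .fls)) (.state (.neg φ))))

/-- Individual knowledge: `K_a φ = D_{\{a\}} φ`. -/
def Kf (a : Ag) (φ : ESLForm AP Ag Act Var) : ESLForm AP Ag Act Var :=
  .know {a} φ

/-- `AG ⋁_{c ∈ Act} K_{ak} AX p^{aa}_c`. -/
noncomputable def wUnifAux2 [Fintype Act] (ak aa : Ag) : ESLForm AP Ag Act Var :=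
  AGf ((Finset.univ.toList.map fun c : Act => Kf ak (AXf (.act aa c))).foldr .or .fls)

/-- The formula `AG ⋁_{c ∈ Act} K_a AX p^a_c` characterizing weak uniformity. -/
noncomputable def wUnifAux [Fintype Act] (a : Ag) : ESLForm AP Ag Act Var :=
  wUnifAux2 a a

/-- The assignment binding only agent `a`, to strategy `σ`. -/
def singleA [DecidableEq Ag] (a : Ag) (σ : Strat S Ag Act) : Assign S Ag Act Var :=
  fun l => match l with
    | Sum.inl b => if b = a then some σ else none
    | Sum.inr _ => none

/-- `σ` is weakly uniform for `a` in `ρ`: on every finite prefix `ρ'`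
(extending `ρ`) of an outcome of `[a ↦ σ]` from `ρ`, and every initial path
`ρ''` indistinguishable from `ρ'` for `a`, `σ(ρ') = σ(ρ'')`. -/
def weaklyUniform [DecidableEq Ag] (I : ICGS S Ag Act AP) (a : Ag)
    (σ : Strat S Ag Act) (ρ : FPath S Ag Act) : Prop :=
  ∀ d ∈ outcomeFrom (singleA a σ : Assign S Ag Act PUnit) ρ,
    ∀ (i : ℕ) (ρ'' : FPath S Ag Act),
      I.rel a (extFPath ρ d i) ρ'' → σ (extFPath ρ d i) = σ ρ''

section Aux

lemma extFPath_zero (ρ : FPath S Ag Act) (d : ℕ → Ag → Act) :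
    extFPath ρ d 0 = ρ := by
  simp [extFPath]

lemma mem_outcomeFrom_singleA {W : Type} [DecidableEq Ag] {a : Ag} {σ : Strat S Ag Act}
    {ρ : FPath S Ag Act} {d : ℕ → Ag → Act} :
    d ∈ outcomeFrom (singleA a σ : Assign S Ag Act W) ρ ↔
      ∀ k, d k a = σ (extFPath ρ d k) := by
  constructor
  · intro h k
    exact h k a σ (by simp [singleA])
  · intro h k b σ' hb
    by_cases hba : b = a
    · subst hba
      simp [singleA] at hb
      subst hb; exact h k
    · simp [singleA, hba] at hb

/-- Canonical list of decisions following `σ` (by all agents) from `ρ`. -/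
def canonL (σ : Strat S Ag Act) (ρ : FPath S Ag Act) : ℕ → List (Ag → Act)
  | 0 => []
  | k + 1 => canonL σ ρ k ++ [fun _ => σ (ρ.1, ρ.2 ++ canonL σ ρ k)]

/-- Canonical decision stream following `σ` (by all agents) from `ρ`. -/
def canonD (σ : Strat S Ag Act) (ρ : FPath S Ag Act) (k : ℕ) : Ag → Act :=
  fun _ => σ (ρ.1, ρ.2 ++ canonL σ ρ k)

lemma ofFn_canonD (σ : Strat S Ag Act) (ρ : FPath S Ag Act) :
    ∀ k, (List.ofFn fun t : Fin k => canonD σ ρ t) = canonL σ ρ k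
  | 0 => by simp [canonL]
  | k + 1 => by
    rw [List.ofFn_succ']
    simp only [Fin.coe_castSucc, Fin.val_last, List.concat_eq_append]
    rw [ofFn_canonD σ ρ k]
    rfl

lemma extFPath_canonD (σ : Strat S Ag Act) (ρ : FPath S Ag Act) (k : ℕ) :
    extFPath ρ (canonD σ ρ) k = (ρ.1, ρ.2 ++ canonL σ ρ k) := by
  simp [extFPath, ofFn_canonD]

lemma canonD_mem {W : Type} [DecidableEq Ag] (a : Ag) (σ : Strat S Ag Act)
    (ρ : FPath S Ag Act) :
    canonD σ ρ ∈ outcomeFrom (singleA a σ : Assign S Ag Act W) ρ := by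
  rw [mem_outcomeFrom_singleA]
  intro k
  rw [extFPath_canonD]
  rfl

lemma extFPath_one (ρ : FPath S Ag Act) (d : ℕ → Ag → Act) :
    extFPath ρ d 1 = (ρ.1, ρ.2 ++ [d 0]) := by
  simp [extFPath, List.ofFn_succ]

lemma sat_AX_act [DecidableEq Ag] [DecidableEq Var] (I : ICGS S Ag Act AP)
    (a : Ag) (σ : Strat S Ag Act) (ρ'' : FPath S Ag Act) (c : Act) :
    ESLsat I (singleA a σ : Assign S Ag Act Var) ρ'' (AXf (.act a c)) ↔ σ ρ'' = c := by
  simp only [AXf, ESLsat, ESLsatP]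
  constructor
  · intro h
    by_contra hne
    exact h ⟨canonD σ ρ'', canonD_mem a σ ρ'', by
      intro hsat
      obtain ⟨dec, hdec, hc⟩ := hsat
      rw [extFPath_one] at hdec
      simp [List.getLast?_concat] at hdec
      subst hdec
      exact hne (by simpa [canonD, canonL] using hc)⟩
  · rintro hc ⟨d, hd, hsat⟩
    rw [mem_outcomeFrom_singleA] at hd
    refine hsat ⟨d 0, ?_, ?_⟩
    · rw [extFPath_one]; simp [List.getLast?_concat]
    · rw [hd 0, extFPath_zero, hc]

lemma sat_know [DecidableEq Ag] [DecidableEq Var] (I : ICGS S Ag Act AP)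
    (χ : Assign S Ag Act Var) (ρ : FPath S Ag Act) (A : Set Ag)
    (φ : ESLForm AP Ag Act Var) :
    ESLsat I χ ρ (.know A φ) ↔
      ∀ ρ' : FPath S Ag Act, (∀ a ∈ A, I.rel a ρ ρ') → ESLsat I χ ρ' φ := by
  simp only [ESLsat]

lemma sat_AG [DecidableEq Ag] [DecidableEq Var] (I : ICGS S Ag Act AP)
    (χ : Assign S Ag Act Var) (ρ : FPath S Ag Act) (φ : ESLForm AP Ag Act Var) :
    ESLsat I χ ρ (AGf φ) ↔
      ∀ d ∈ outcomeFrom χ ρ, ∀ i, ESLsat I χ (extFPath ρ d i) φ := by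
  simp only [AGf, ESLsat, ESLsatP, not_false_iff, not_exists, not_and, not_not]
  constructor
  · intro h d hd i
    by_contra hne
    exact h d hd i (Nat.zero_le i) hne (fun k _ _ => trivial)
  · intro h d hd i _ hne _
    exact hne (h d hd i)

lemma sat_disj [DecidableEq Ag] [DecidableEq Var] (I : ICGS S Ag Act AP)
    (χ : Assign S Ag Act Var) (ρ : FPath S Ag Act)
    (f : Act → ESLForm AP Ag Act Var) (l : List Act) :
    ESLsat I χ ρ ((l.map f).foldr .or .fls) ↔ ∃ c ∈ l, ESLsat I χ ρ (f c) := by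
  induction l with
  | nil => simp [ESLsat]
  | cons x xs ih =>
    simp only [List.map_cons, List.foldr_cons, ESLsat, ih, List.mem_cons]
    constructor
    · rintro (h | ⟨c, hc, h⟩)
      · exact ⟨x, Or.inl rfl, h⟩
      · exact ⟨c, Or.inr hc, h⟩
    · rintro ⟨c, (rfl | hc), h⟩
      · exact Or.inl h
      · exact Or.inr ⟨c, hc, h⟩

end Aux

/-- `σ` is weakly uniform for `a` in `ρ` iff
`I, [a ↦ σ], ρ ⊨ AG ⋁_{c ∈ Act} K_a AX p^a_c`. -/
theorem statement_11 [DecidableEq Ag] [DecidableEq Var] [Fintype Act] [Nonempty Act]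
    (I : ICGS S Ag Act AP) (ρ : FPath S Ag Act) (a : Ag) (σ : Strat S Ag Act) :
    weaklyUniform I a σ ρ ↔
      ESLsat I (singleA a σ : Assign S Ag Act Var) ρ (wUnifAux a) := by
  have key : ∀ ρ' : FPath S Ag Act,
      ESLsat I (singleA a σ : Assign S Ag Act Var) ρ'
        ((Finset.univ.toList.map fun c : Act => Kf a (AXf (.act a c))).foldr .or .fls)
      ↔ ∀ ρ'' : FPath S Ag Act, I.rel a ρ' ρ'' → σ ρ' = σ ρ'' := by
    intro ρ'
    rw [sat_disj]
    simp only [Kf, sat_know, sat_AX_act, Set.mem_singleton_iff, forall_eq]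
    constructor
    · rintro ⟨c, -, h⟩ ρ'' hrel
      rw [h ρ' ((I.rel_equiv a).refl ρ'), h ρ'' hrel]
    · intro h
      exact ⟨σ ρ', by simp, fun ρ'' hrel => (h ρ'' hrel).symm⟩
  show _ ↔ ESLsat I (singleA a σ : Assign S Ag Act Var) ρ (wUnifAux2 a a)
  unfold wUnifAux2
  rw [sat_AG]
  simp only [key]
  constructor
  · intro h d hd i ρ'' hrel
    exact h d (mem_outcomeFrom_singleA.mpr (mem_outcomeFrom_singleA.mp hd)) i ρ'' hrel
  · intro h d hd i ρ'' hrel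
    exact h d (mem_outcomeFrom_singleA.mpr (mem_outcomeFrom_singleA.mp hd)) i ρ'' hrel
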